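/- arXiv:2509.01143 — 3 statements merged into one kernel-verified Lean document; each statement's English description precedes it below -/
import Mathlib

section
/- Let P = m_t + √λ(a_s† + a_s) + λ k_s on the one-mode s-weighted free Fock space, and let the polynomials C_n be defined by C_0(x) = 1, C_1(x) = x − λ, and C_{n+1}(x) = (x − (λ s^n + t^{n−1})) C_n(x) − λ s^{n−1} C_{n−1}(x) for n ≥ 1. Then C_n(P) Ω = λ^{n/2} ξ^{⊗n} for all n ≥ 0. -/
/-! In the basis `ξ^{⊗m}` the operator `P` is tridiagonal: it raises with coefficient `√λ`, has
diagonal `λ s^m + t^(m-1)` (just `λ` at `m = 0`) and lowers with coefficient `√λ s^(m-1)`. The `C_n`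
obey exactly the three-term recurrence of this Jacobi operator, so `C_n(P) Ω = √λ^n ξ^{⊗n}` follows
by a two-step induction. -/

/-- The basis vector `ξ^{⊗ m}` of the one-mode Fock space, modeled as `ℕ →₀ ℝ`. -/
noncomputable def e (m : ℕ) : ℕ →₀ ℝ := Finsupp.single m 1

open Polynomial

theorem aeval_apply_eq_pow_smul_of_tridiagonal {R M : Type*} [CommRing R] [AddCommGroup M]
    [Module R M] (P : Module.End R M) (v : ℕ → M) (r : R) (α β : ℕ → R)
    (hP0 : P (v 0) = r • v 1 + α 0 • v 0)
    (hP : ∀ m, P (v (m + 1)) = r • v (m + 2) + α (m + 1) • v (m + 1) + β m • v m)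
    (C : ℕ → R[X]) (hC0 : C 0 = 1) (hC1 : C 1 = X - Polynomial.C (α 0))
    (hC : ∀ n, C (n + 2) = (X - Polynomial.C (α (n + 1))) * C (n + 1)
      - Polynomial.C (r * β n) * C n) :
    ∀ n, aeval P (C n) (v 0) = r ^ n • v n := by
  refine Nat.twoStepInduction ?_ ?_ fun n ih₀ ih₁ => ?_
  · simp [hC0]
  · simp [hC1, hP0]
  · simp only [hC, map_sub, map_mul, aeval_X, aeval_C, LinearMap.sub_apply, Module.End.mul_apply,
      Module.algebraMap_end_apply, ih₀, ih₁, map_smul, hP]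
    match_scalars <;> ring

theorem Real.sqrt_pow {x : ℝ} (hx : 0 ≤ x) (n : ℕ) : √(x ^ n) = √x ^ n := by
  rw [Real.sqrt_eq_iff_mul_self_eq (pow_nonneg hx n) (pow_nonneg (Real.sqrt_nonneg x) n),
    ← mul_pow, Real.mul_self_sqrt hx]

theorem stmt4_general (lam s t : ℝ) (hlam : 0 < lam)
    (a adag k mt : Module.End ℝ (ℕ →₀ ℝ))
    (ha0 : a (e 0) = 0)
    (ha : ∀ m : ℕ, 1 ≤ m → a (e m) = s ^ (m - 1) • e (m - 1))
    (hadag : ∀ m : ℕ, adag (e m) = e (m + 1))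
    (hk : ∀ m : ℕ, k (e m) = s ^ m • e m)
    (hmt0 : mt (e 0) = 0)
    (hmt : ∀ m : ℕ, 1 ≤ m → mt (e m) = t ^ (m - 1) • e m)
    (C : ℕ → Polynomial ℝ)
    (hC0 : C 0 = 1)
    (hC1 : C 1 = Polynomial.X - Polynomial.C lam)
    (hCrec : ∀ n : ℕ, 1 ≤ n →
      C (n + 1) = (Polynomial.X - Polynomial.C (lam * s ^ n + t ^ (n - 1))) * C n
        - Polynomial.C (lam * s ^ (n - 1)) * C (n - 1)) :
    ∀ n : ℕ,
      (Polynomial.aeval (mt + Real.sqrt lam • (adag + a) + lam • k) (C n)) (e 0)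
        = Real.sqrt (lam ^ n) • e n := by
  intro n
  rw [Real.sqrt_pow hlam.le]
  refine aeval_apply_eq_pow_smul_of_tridiagonal _ e √lam
    (fun | 0 => lam | m + 1 => lam * s ^ (m + 1) + t ^ m) (fun m => √lam * s ^ m) ?_ (fun m => ?_) C hC0 hC1 (fun m => ?_) n
  · simp only [LinearMap.add_apply, LinearMap.smul_apply, hmt0, hadag, ha0, hk]
    module
  · simp only [LinearMap.add_apply, LinearMap.smul_apply, hmt (m + 1) m.succ_pos, hadag,
      ha (m + 1) m.succ_pos, hk, Nat.add_sub_cancel]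
    module
  · simpa [Real.mul_self_sqrt hlam.le, ← mul_assoc] using hCrec (m + 1) m.succ_pos

theorem stmt4 (lam s t : ℝ) (hlam : 0 < lam)
    (hs : 0 < s) (hs1 : s ≤ 1) (ht : 0 < t) (ht1 : t ≤ 1)
    (a adag k mt : Module.End ℝ (ℕ →₀ ℝ))
    (ha0 : a (e 0) = 0)
    (ha : ∀ m : ℕ, 1 ≤ m → a (e m) = s ^ (m - 1) • e (m - 1))
    (hadag : ∀ m : ℕ, adag (e m) = e (m + 1))
    (hk : ∀ m : ℕ, k (e m) = s ^ m • e m)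
    (hmt0 : mt (e 0) = 0)
    (hmt : ∀ m : ℕ, 1 ≤ m → mt (e m) = t ^ (m - 1) • e m)
    (C : ℕ → Polynomial ℝ)
    (hC0 : C 0 = 1)
    (hC1 : C 1 = Polynomial.X - Polynomial.C lam)
    (hCrec : ∀ n : ℕ, 1 ≤ n →
      C (n + 1) = (Polynomial.X - Polynomial.C (lam * s ^ n + t ^ (n - 1))) * C n
        - Polynomial.C (lam * s ^ (n - 1)) * C (n - 1)) :
    ∀ n : ℕ,
      (Polynomial.aeval (mt + Real.sqrt lam • (adag + a) + lam • k) (C n)) (e 0)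
        = Real.sqrt (lam ^ n) • e n :=
  stmt4_general lam s t hlam a adag k mt ha0 ha hadag hk hmt0 hmt C hC0 hC1 hCrec
end

section
/- With P and C_n as above, the polynomials C_n are orthogonal with respect to the vacuum functional: for m ≠ n, the vacuum expectation φ(C_n(P) C_m(P)) = (C_n(P) C_m(P) Ω | Ω)_s = 0. -/
noncomputable def ip (s : ℝ) (v w : ℕ →₀ ℝ) : ℝ :=
  ∑ m ∈ v.support ∪ w.support, s ^ (m * (m - 1) / 2) * v m * w m

open Polynomial LinearMap

section SelfAdjoint

variable {R M ι : Type*} [CommRing R] [AddCommGroup M] [Module R M] {B : LinearMap.BilinForm R M}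

theorem LinearMap.isAdjointPair_of_basis (b : Module.Basis ι R M) {f g : Module.End R M}
    (h : ∀ i j, B (f (b i)) (b j) = B (b i) (g (b j))) : IsAdjointPair B B f g :=
  isAdjointPair_iff_comp_eq_compl₂.mpr (ext_basis b b h)

theorem LinearMap.BilinForm.IsSymm.isSelfAdjoint_add_of_isAdjointPair (hB : B.IsSymm)
    {f g : Module.End R M} (h : IsAdjointPair B B f g) : B.IsSelfAdjoint ⇑(f + g) := fun x y => by
  rw [LinearMap.add_apply, LinearMap.add_apply, map_add, map_add, LinearMap.add_apply, h x y,
    hB.eq (g x) y, ← h y x, hB.eq (f y) x, add_comm]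

theorem LinearMap.isSelfAdjoint_of_basis_diagonal (b : Module.Basis ι R M)
    (hB : ∀ i j, i ≠ j → B (b i) (b j) = 0) {T : Module.End R M} (d : ι → R)
    (hT : ∀ i, T (b i) = d i • b i) : B.IsSelfAdjoint T :=
  isAdjointPair_of_basis b fun i j => by
    rcases eq_or_ne i j with rfl | hij
    · simp [hT]
    · simp [hT, hB i j hij]

theorem LinearMap.IsSelfAdjoint.pow {f : Module.End R M} (hf : B.IsSelfAdjoint f) (n : ℕ) :
    B.IsSelfAdjoint ⇑(f ^ n) := by
  induction n with
  | zero => exact isAdjointPair_one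
  | succ n ih =>
    have h := ih.mul hf
    rwa [← pow_succ, ← pow_succ'] at h

theorem LinearMap.IsSelfAdjoint.aeval {f : Module.End R M} (hf : B.IsSelfAdjoint f) (p : R[X]) :
    B.IsSelfAdjoint ⇑(aeval f p) := by
  induction p using Polynomial.induction_on' with
  | add p q hp hq =>
    rw [map_add]
    exact hp.add hq
  | monomial n c =>
    rw [aeval_monomial, ← Algebra.smul_def]
    exact (hf.pow n).smul c

end SelfAdjoint

theorem aeval_apply_eq_of_threeTermRecurrence {R V : Type*} [CommRing R] [AddCommGroup V]
    [Module R V] (J : Module.End R V) (f : ℕ → V) (α β : ℕ → R) (p : ℕ → R[X])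
    (hJ0 : J (f 0) = f 1 + α 0 • f 0)
    (hJ : ∀ n, J (f (n + 1)) = f (n + 2) + α (n + 1) • f (n + 1) + β (n + 1) • f n)
    (hp0 : p 0 = 1) (hp1 : p 1 = X - C (α 0))
    (hp : ∀ n, p (n + 2) = (X - C (α (n + 1))) * p (n + 1) - C (β (n + 1)) * p n) (n : ℕ) :
    aeval J (p n) (f 0) = f n := by
  induction n using Nat.twoStepInduction with
  | zero => simp [hp0]
  | one => simp [hp1, hJ0]
  | more n ih ih' =>
    simp only [hp, map_sub, map_mul, aeval_X, aeval_C, LinearMap.sub_apply, Module.End.mul_apply,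
      Module.algebraMap_end_apply, ih, ih', hJ]
    abel

/-- `ip` as a bilinear form: the weighted sum of the pointwise product `v * w`. -/
noncomputable def ipForm (s : ℝ) : LinearMap.BilinForm ℝ (ℕ →₀ ℝ) :=
  mk₂ ℝ (fun v w => Finsupp.linearCombination ℝ (fun m => s ^ (m * (m - 1) / 2)) (v * w))
    (fun _ _ _ => by rw [add_mul, map_add])
    (fun c v w => by rw [← map_smul]; congr 1; ext; simp [mul_assoc])
    (fun _ _ _ => by rw [mul_add, map_add])
    (fun c v w => by rw [← map_smul]; congr 1; ext; simp [mul_left_comm])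

theorem ipForm_apply (s : ℝ) (v w : ℕ →₀ ℝ) : ipForm s v w = ip s v w := by
  rw [ipForm, mk₂_apply, Finsupp.linearCombination_apply, ip, Finsupp.sum]
  refine (Finset.sum_subset (s₂ := v.support ∪ w.support)
    (Finsupp.support_mul_subset_left.trans Finset.subset_union_left) fun m _ hm => ?_).trans ?_
  · simp [Finsupp.notMem_support_iff.mp hm]
  · refine Finset.sum_congr rfl fun m _ => ?_
    simp only [Finsupp.mul_apply, smul_eq_mul]
    ring

theorem ipForm_isSymm (s : ℝ) : (ipForm s).IsSymm :=
  ⟨fun v w => by simp only [ipForm, mk₂_apply, mul_comm]⟩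

theorem ipForm_e_e (s : ℝ) (i j : ℕ) :
    ipForm s (e i) (e j) = if i = j then s ^ (i * (i - 1) / 2) else 0 := by
  rw [ipForm, mk₂_apply, e, e]
  split_ifs with h
  · subst h
    simp [← Finsupp.single_mul]
  · have : Finsupp.single i (1 : ℝ) * Finsupp.single j 1 = 0 := by
      ext m
      simp only [Finsupp.mul_apply, Finsupp.single_apply]
      grind
    simp [this]

theorem pow_triangle_succ (s : ℝ) (m : ℕ) :
    s ^ ((m + 1) * m / 2) = s ^ m * s ^ (m * (m - 1) / 2) := by
  have h := Nat.choose_succ_succ' m 1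
  rw [Nat.choose_two_right, Nat.choose_two_right, Nat.choose_one_right, Nat.add_sub_cancel] at h
  rw [h, pow_add, mul_comm]

theorem ipForm_isSelfAdjoint_of_diagonal (s : ℝ) {T : Module.End ℝ (ℕ →₀ ℝ)} (d : ℕ → ℝ)
    (hT : ∀ m, T (e m) = d m • e m) : (ipForm s).IsSelfAdjoint T :=
  isSelfAdjoint_of_basis_diagonal Finsupp.basisSingleOne
    (fun i j hij => (ipForm_e_e s i j).trans (if_neg hij)) d hT

theorem ipForm_isAdjointPair_raising_lowering (s : ℝ) {a adag : Module.End ℝ (ℕ →₀ ℝ)}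
    (ha0 : a (e 0) = 0) (ha : ∀ m, a (e (m + 1)) = s ^ m • e m)
    (hadag : ∀ m, adag (e m) = e (m + 1)) : IsAdjointPair (ipForm s) (ipForm s) adag a :=
  isAdjointPair_of_basis Finsupp.basisSingleOne fun i j => by
    change ipForm s (adag (e i)) (e j) = ipForm s (e i) (a (e j))
    rcases j with _ | j
    · simp [hadag, ha0, ipForm_e_e]
    · simp only [hadag, ha, map_smul, ipForm_e_e, add_left_inj, smul_eq_mul]
      split_ifs with hij
      · rw [hij, Nat.add_sub_cancel, pow_triangle_succ]
      · simp

theorem stmt5_general (lam s t : ℝ) (hlam : 0 < lam)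
    (a adag k mt : Module.End ℝ (ℕ →₀ ℝ))
    (ha0 : a (e 0) = 0)
    (ha : ∀ m : ℕ, 1 ≤ m → a (e m) = s ^ (m - 1) • e (m - 1))
    (hadag : ∀ m : ℕ, adag (e m) = e (m + 1))
    (hk : ∀ m : ℕ, k (e m) = s ^ m • e m)
    (hmt0 : mt (e 0) = 0)
    (hmt : ∀ m : ℕ, 1 ≤ m → mt (e m) = t ^ (m - 1) • e m)
    (C : ℕ → Polynomial ℝ)
    (hC0 : C 0 = 1)
    (hC1 : C 1 = Polynomial.X - Polynomial.C lam)
    (hCrec : ∀ n : ℕ, 1 ≤ n →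
      C (n + 1) = (Polynomial.X - Polynomial.C (lam * s ^ n + t ^ (n - 1))) * C n
        - Polynomial.C (lam * s ^ (n - 1)) * C (n - 1)) :
    ∀ m n : ℕ, m ≠ n →
      ip s ((Polynomial.aeval (mt + Real.sqrt lam • (adag + a) + lam • k) (C n) *
             Polynomial.aeval (mt + Real.sqrt lam • (adag + a) + lam • k) (C m)) (e 0))
        (e 0) = 0 := by
  intro m n hmn
  set P := mt + Real.sqrt lam • (adag + a) + lam • k
  have ha' (j : ℕ) : a (e (j + 1)) = s ^ j • e j := by simpa using ha (j + 1) j.succ_pos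
  let τ (j : ℕ) : ℝ := if j = 0 then 0 else t ^ (j - 1)
  have hmt' (j : ℕ) : mt (e j) = τ j • e j := by
    rcases j with _ | j
    · simp [τ, hmt0]
    · simpa [τ] using hmt (j + 1) j.succ_pos
  have hP : (ipForm s).IsSelfAdjoint P := by
    rw [← mem_selfAdjointSubmodule]
    exact add_mem (add_mem (ipForm_isSelfAdjoint_of_diagonal s τ hmt') (Submodule.smul_mem _ _
      ((ipForm_isSymm s).isSelfAdjoint_add_of_isAdjointPair
        (ipForm_isAdjointPair_raising_lowering s ha0 ha' hadag))))
      (Submodule.smul_mem _ _ (ipForm_isSelfAdjoint_of_diagonal s _ hk))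
  have hvac (q : ℕ) : aeval P (C q) (e 0) = Real.sqrt lam ^ q • e q := by
    have h := aeval_apply_eq_of_threeTermRecurrence P (fun q => Real.sqrt lam ^ q • e q)
      (fun j => lam * s ^ j + τ j) (fun j => lam * s ^ (j - 1)) C ?_ ?_ hC0
      (by simpa [τ] using hC1)
      (fun j => by simpa [τ] using hCrec (j + 1) j.succ_pos) q
    · simpa using h
    · simp [P, hmt', τ, ha0, hadag, hk]
    · intro j
      simp [P, hmt', τ, ha', hadag, hk]
      linear_combination (norm := module) Real.sq_sqrt hlam.le • (s ^ j * Real.sqrt lam ^ j) • e j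
  rw [← ipForm_apply, Module.End.mul_apply, hP.aeval, hvac, hvac]
  simp [ipForm_e_e, hmn]

theorem stmt5 (lam s t : ℝ) (hlam : 0 < lam)
    (hs : 0 < s) (hs1 : s ≤ 1) (ht : 0 < t) (ht1 : t ≤ 1)
    (a adag k mt : Module.End ℝ (ℕ →₀ ℝ))
    (ha0 : a (e 0) = 0)
    (ha : ∀ m : ℕ, 1 ≤ m → a (e m) = s ^ (m - 1) • e (m - 1))
    (hadag : ∀ m : ℕ, adag (e m) = e (m + 1))
    (hk : ∀ m : ℕ, k (e m) = s ^ m • e m)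
    (hmt0 : mt (e 0) = 0)
    (hmt : ∀ m : ℕ, 1 ≤ m → mt (e m) = t ^ (m - 1) • e m)
    (C : ℕ → Polynomial ℝ)
    (hC0 : C 0 = 1)
    (hC1 : C 1 = Polynomial.X - Polynomial.C lam)
    (hCrec : ∀ n : ℕ, 1 ≤ n →
      C (n + 1) = (Polynomial.X - Polynomial.C (lam * s ^ n + t ^ (n - 1))) * C n
        - Polynomial.C (lam * s ^ (n - 1)) * C (n - 1)) :
    ∀ m n : ℕ, m ≠ n →
      ip s ((Polynomial.aeval (mt + Real.sqrt lam • (adag + a) + lam • k) (C n) *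
             Polynomial.aeval (mt + Real.sqrt lam • (adag + a) + lam • k) (C m)) (e 0))
        (e 0) = 0 :=
  stmt5_general lam s t hlam a adag k mt ha0 ha hadag hk hmt0 hmt C hC0 hC1 hCrec
end

section
/- For a block B of a non-crossing partition π of [n] with |B| ≥ 3 and any intermediate element i ∈ B (i.e., min B < i < max B), the depth of i equals the depth of max B: dp(i) = dp(ℓ_B). -/
/-!
All elements of one block have the same covering blocks. If a block `C` covered an element
`i` of `B` but not a larger element `j` of `B`, some element of `C` would lie strictly between
`i` and `j` while another lies below `i`, and `C` would cross `B`; symmetrically when `C`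
covers `j` but not `i`. Hence `dp` is constant on every block.
-/

open scoped Classical

/-- `π` is a partition of `[n] = {1, …, n}`: nonempty pairwise disjoint blocks
whose union is `{1, …, n}`. -/
def IsPartitionOf (n : ℕ) (π : Finset (Finset ℕ)) : Prop :=
  (∀ B ∈ π, B.Nonempty) ∧
  (∀ B ∈ π, ∀ C ∈ π, B ≠ C → Disjoint B C) ∧
  (∀ a : ℕ, a ∈ Finset.Icc 1 n ↔ ∃ B ∈ π, a ∈ B)

/-- `π` is non-crossing: there are no blocks `B ≠ C` and `b₁ < c₁ < b₂ < c₂`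
with `b₁, b₂ ∈ B` and `c₁, c₂ ∈ C`. -/
def NonCrossing (π : Finset (Finset ℕ)) : Prop :=
  ¬ ∃ B ∈ π, ∃ C ∈ π, B ≠ C ∧ ∃ b₁ ∈ B, ∃ c₁ ∈ C, ∃ b₂ ∈ B, ∃ c₂ ∈ C,
      b₁ < c₁ ∧ c₁ < b₂ ∧ b₂ < c₂

/-- `dp π a` is the number of blocks `C` of `π` that cover `a`, i.e. with
`a ∉ C` and `min C < a < max C`. -/
noncomputable def dp (π : Finset (Finset ℕ)) (a : ℕ) : ℕ :=
  (π.filter fun C => a ∉ C ∧ (∃ x ∈ C, x < a) ∧ (∃ y ∈ C, a < y)).card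

abbrev Covers (C : Finset ℕ) (a : ℕ) : Prop :=
  a ∉ C ∧ (∃ x ∈ C, x < a) ∧ ∃ y ∈ C, a < y

lemma dp_eq_card_filter_covers (π : Finset (Finset ℕ)) (a : ℕ) :
    dp π a = (π.filter (Covers · a)).card :=
  rfl

lemma not_covers_of_mem {C : Finset ℕ} {a : ℕ} (ha : a ∈ C) : ¬ Covers C a :=
  fun h => h.1 ha

namespace NonCrossing

variable {π : Finset (Finset ℕ)} {B C : Finset ℕ} {i j : ℕ}

lemma covers_iff_of_lt (hnc : NonCrossing π) (hB : B ∈ π) (hC : C ∈ π) (hBC : B ≠ C)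
    (hdisj : Disjoint B C) (hi : i ∈ B) (hj : j ∈ B) (hij : i < j) :
    Covers C i ↔ Covers C j := by
  have hiC : i ∉ C := Finset.disjoint_left.mp hdisj hi
  have hjC : j ∉ C := Finset.disjoint_left.mp hdisj hj
  constructor
  · rintro ⟨-, ⟨x, hxC, hxi⟩, ⟨y, hyC, hiy⟩⟩
    have hjy : j < y := by
      rcases lt_trichotomy y j with hyj | rfl | hjy
      · exact absurd ⟨C, hC, B, hB, hBC.symm, x, hxC, i, hi, y, hyC, j, hj, hxi, hiy, hyj⟩ hnc
      · exact absurd hyC hjC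
      · exact hjy
    exact ⟨hjC, ⟨x, hxC, hxi.trans hij⟩, ⟨y, hyC, hjy⟩⟩
  · rintro ⟨-, ⟨x, hxC, hxj⟩, ⟨y, hyC, hjy⟩⟩
    have hxi : x < i := by
      rcases lt_trichotomy x i with hxi | rfl | hix
      · exact hxi
      · exact absurd hxC hiC
      · exact absurd ⟨B, hB, C, hC, hBC, i, hi, x, hxC, j, hj, y, hyC, hix, hxj, hjy⟩ hnc
    exact ⟨hiC, ⟨x, hxC, hxi⟩, ⟨y, hyC, hij.trans hjy⟩⟩

lemma covers_iff_of_mem (hnc : NonCrossing π) (hB : B ∈ π) (hC : C ∈ π)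
    (hdisj : ∀ B ∈ π, ∀ C ∈ π, B ≠ C → Disjoint B C) (hi : i ∈ B) (hj : j ∈ B) :
    Covers C i ↔ Covers C j := by
  by_cases hCB : C = B
  · subst hCB
    exact iff_of_false (not_covers_of_mem hi) (not_covers_of_mem hj)
  have hBC : B ≠ C := Ne.symm hCB
  rcases lt_trichotomy i j with hij | rfl | hji
  · exact hnc.covers_iff_of_lt hB hC hBC (hdisj B hB C hC hBC) hi hj hij
  · rfl
  · exact (hnc.covers_iff_of_lt hB hC hBC (hdisj B hB C hC hBC) hj hi hji).symm

lemma dp_eq_of_mem (hnc : NonCrossing π) (hdisj : ∀ B ∈ π, ∀ C ∈ π, B ≠ C → Disjoint B C)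
    (hB : B ∈ π) (hi : i ∈ B) (hj : j ∈ B) : dp π i = dp π j := by
  rw [dp_eq_card_filter_covers, dp_eq_card_filter_covers]
  exact congrArg Finset.card
    (Finset.filter_congr fun C hC => hnc.covers_iff_of_mem hB hC hdisj hi hj)

end NonCrossing

theorem stmt7_general (n : ℕ) (π : Finset (Finset ℕ))
    (hpart : IsPartitionOf n π) (hnc : NonCrossing π)
    (B : Finset ℕ) (hB : B ∈ π) (hne : B.Nonempty)
    (i : ℕ) (hi : i ∈ B) :
    dp π i = dp π (B.max' hne) :=
  hnc.dp_eq_of_mem hpart.2.1 hB hi (B.max'_mem hne)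

theorem stmt7 (n : ℕ) (π : Finset (Finset ℕ))
    (hpart : IsPartitionOf n π) (hnc : NonCrossing π)
    (B : Finset ℕ) (hB : B ∈ π) (hne : B.Nonempty) (hcard : 3 ≤ B.card)
    (i : ℕ) (hi : i ∈ B) (hi1 : B.min' hne < i) (hi2 : i < B.max' hne) :
    dp π i = dp π (B.max' hne) :=
  stmt7_general n π hpart hnc B hB hne i hi
end
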